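/- arXiv:1311.2466 — 6 statements merged into one kernel-verified Lean document; each statement's English description precedes it below -/
import Mathlib

section
/- For all real numbers δ and x, if 0 < δ < 1/2 and δ·|x| ≤ 1/2, then |(1+δ)^x − 1| ≥ (1/4)·δ·|x|. -/
open Real

theorem Real.abs_div_two_le_abs_exp_sub_one {t : ℝ} (ht : |t| ≤ 1 / 2) :
    |t| / 2 ≤ |exp t - 1| := by
  have hquad : |exp t - 1 - t| ≤ |t| ^ 2 := by
    simpa only [sq_abs] using abs_exp_sub_one_sub_id_le (ht.trans (by norm_num))
  have hsq : |t| ^ 2 ≤ |t| / 2 := by nlinarith [abs_nonneg t]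
  have hrev : |t| - |exp t - 1| ≤ |exp t - 1 - t| := by
    simpa only [abs_sub_comm t] using abs_sub_abs_le_abs_sub t (exp t - 1)
  linarith

theorem Real.half_le_log_one_add {x : ℝ} (h0 : 0 ≤ x) (h2 : x ≤ 2) : x / 2 ≤ log (1 + x) := by
  refine le_trans ?_ (le_log_one_add_of_nonneg h0)
  rw [le_div_iff₀ (by linarith)]
  nlinarith

theorem abs_rpow_sub_one_ge (δ x : ℝ) (hδ0 : 0 < δ) (hδ : δ < 1/2)
    (hx : δ * |x| ≤ 1/2) :
    (1/4) * δ * |x| ≤ |(1 + δ) ^ x - 1| := by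
  have hlog_nonneg : 0 ≤ log (1 + δ) := log_nonneg (by linarith)
  have hlog_le : log (1 + δ) ≤ δ := by linarith [log_le_sub_one_of_pos (by linarith : 0 < 1 + δ)]
  have habs : |log (1 + δ) * x| = log (1 + δ) * |x| := by
    rw [abs_mul, abs_of_nonneg hlog_nonneg]
  rw [rpow_def_of_pos (by linarith)]
  calc (1/4) * δ * |x| = δ / 2 * |x| / 2 := by ring
    _ ≤ |log (1 + δ) * x| / 2 := by
      rw [habs]
      gcongr
      exact half_le_log_one_add hδ0.le (by linarith)
    _ ≤ |exp (log (1 + δ) * x) - 1| := by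
      refine abs_div_two_le_abs_exp_sub_one ?_
      rw [habs]
      exact (mul_le_mul_of_nonneg_right hlog_le (abs_nonneg x)).trans hx
end

section
/- For all real numbers δ and γ, if 0 < δ < 1/2 and γ ≥ 0, then (1+δ)^γ ≥ (1+γ)^{δ/2}. Equivalently, γ ≥ (δ/2)·log_{(1+δ)}(1+γ). -/
/-!
Since `log (1 + γ) ≤ γ` and `δ / 2 ≤ log (1 + δ)` (valid for `0 ≤ δ ≤ 2`), we get
`(1 + γ) ^ (δ / 2) ≤ exp (γ δ / 2) = exp (δ / 2) ^ γ ≤ (1 + δ) ^ γ`.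
The logarithmic form follows by applying `logb (1 + δ)` to both sides.
-/

open Real

lemma exp_half_le_one_add {x : ℝ} (hx0 : 0 ≤ x) (hx2 : x ≤ 2) : exp (x / 2) ≤ 1 + x := by
  have h : x / 2 ≤ log (1 + x) :=
    calc x / 2 ≤ 2 * x / (x + 2) := by
          rw [le_div_iff₀ (by linarith)]
          nlinarith
      _ ≤ log (1 + x) := le_log_one_add_of_nonneg hx0
  exact (le_log_iff_exp_le (by linarith)).mp h

lemma one_add_rpow_half_le_one_add_rpow {x y : ℝ} (hx0 : 0 ≤ x) (hx2 : x ≤ 2) (hy : 0 ≤ y) :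
    (1 + y) ^ (x / 2) ≤ (1 + x) ^ y :=
  calc (1 + y) ^ (x / 2) ≤ exp y ^ (x / 2) :=
        rpow_le_rpow (by linarith) (by linarith [add_one_le_exp y]) (by linarith)
    _ = exp (x / 2) ^ y := by rw [← exp_mul, ← exp_mul, mul_comm]
    _ ≤ (1 + x) ^ y := rpow_le_rpow (exp_pos _).le (exp_half_le_one_add hx0 hx2) hy

lemma mul_logb_le_of_rpow_le {a b s t : ℝ} (ha : 0 < a) (hb : 1 < b) (h : a ^ s ≤ b ^ t) :
    s * logb b a ≤ t := by
  have := logb_le_logb_of_le hb (rpow_pos_of_pos ha s) h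
  rwa [logb_rpow_eq_mul_logb_of_pos ha, logb_rpow (by linarith) hb.ne'] at this

theorem rpow_ineq (δ γ : ℝ) (hδ0 : 0 < δ) (hδ : δ < 1/2) (hγ : 0 ≤ γ) :
    (1 + γ) ^ (δ / 2) ≤ (1 + δ) ^ γ ∧
      (δ / 2) * Real.logb (1 + δ) (1 + γ) ≤ γ := by
  have hpow := one_add_rpow_half_le_one_add_rpow hδ0.le (by linarith) hγ
  exact ⟨hpow, mul_logb_le_of_rpow_le (by linarith) (by linarith) hpow⟩
end

section
/- Let δ be a real number with 0 < δ < 1/2. Let y₁, y₂ > 0 be reals, let k₁, k₂ be integers, set z₁ = (1+δ)^{k₁} and z₂ = (1+δ)^{k₂}, and define λᵢ = log_{(1+δ)}(zᵢ/yᵢ) for i = 1,2. Assume max(|λ₁|, |λ₂|) < 1/(4δ). Let a = z₁ + z₂ and let p = log_{(1+δ)}(a) − ⌊log_{(1+δ)}(a)⌋. Then |log_{(1+δ)}(a / (y₁ + y₂))| ≤ max(|λ₁|, |λ₂|) − (1/20)·δ·p·|λ₁ − λ₂|. -/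
/-!
Put `b = 1 + δ` and `wᵢ = zᵢ / a`. Since `yᵢ = zᵢ b^(-λᵢ)`, the quantity `b^(-L)` with
`L = log_b (a / (y₁ + y₂))` is the convex combination `w₁ b^(-λ₁) + w₂ b^(-λ₂)`. Convexity of `exp`
puts `L` below `w₁ λ₁ + w₂ λ₂`, and `log x ≤ x - 1` puts it above the smaller `λᵢ` by a comparable
margin as long as `|λ₁ - λ₂| log b` is small; so `L` stays inside `[λ₂, λ₁]` by a margin
proportional to `min wᵢ · |λ₁ - λ₂|`. The rounding probability is small when `min wᵢ` is: the floor
of `log_b a` is at least `max kᵢ`, so `p log b ≤ log (a / max zᵢ) ≤ min zᵢ / max zᵢ ≤ 2 min wᵢ`.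
-/

open Real

/-- The weighted quasi-arithmetic mean of `s₁, s₂` with generator `x ↦ exp (-x)`. -/
noncomputable def expNegMean (w₁ w₂ s₁ s₂ : ℝ) : ℝ :=
  -log (w₁ * exp (-s₁) + w₂ * exp (-s₂))

section expNegMean

variable {w₁ w₂ : ℝ}

theorem expNegMean_le (hw₁ : 0 ≤ w₁) (hw₂ : 0 ≤ w₂) (hw : w₁ + w₂ = 1) (s₁ s₂ : ℝ) :
    expNegMean w₁ w₂ s₁ s₂ ≤ w₁ * s₁ + w₂ * s₂ := by
  have hjensen := convexOn_exp.2 (Set.mem_univ (-s₁)) (Set.mem_univ (-s₂)) hw₁ hw₂ hw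
  simp only [smul_eq_mul] at hjensen
  have hpos : 0 < w₁ * exp (-s₁) + w₂ * exp (-s₂) := (exp_pos _).trans_le hjensen
  have := (le_log_iff_exp_le hpos).2 hjensen
  unfold expNegMean
  linarith

theorem le_expNegMean (hw₁ : 0 ≤ w₁) (hw₂ : 0 ≤ w₂) (hw : w₁ + w₂ = 1) {s₁ s₂ : ℝ}
    (h : s₂ ≤ s₁) :
    s₂ + w₁ * (s₁ - s₂) / (1 + (s₁ - s₂)) ≤ expNegMean w₁ w₂ s₁ s₂ := by
  set d := s₁ - s₂
  have hd : 0 ≤ d := sub_nonneg.2 h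
  have hfactor : w₁ * exp (-s₁) + w₂ * exp (-s₂) = exp (-s₂) * (1 - w₁ * (1 - exp (-d))) := by
    rw [show -s₁ = -s₂ + -d by ring, exp_add, show w₂ = 1 - w₁ by linarith]; ring
  have hexp : exp (-d) ≤ 1 / (1 + d) := by
    rw [exp_neg, ← one_div]
    exact one_div_le_one_div_of_le (by linarith) (by linarith [add_one_le_exp d])
  have hgap : w₁ * d / (1 + d) ≤ w₁ * (1 - exp (-d)) := by
    have : d / (1 + d) = 1 - 1 / (1 + d) := by field_simp; ring
    rw [mul_div_assoc, this]
    exact mul_le_mul_of_nonneg_left (by linarith) hw₁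
  have hpos : 0 < 1 - w₁ * (1 - exp (-d)) := by
    have := exp_pos (-d)
    nlinarith [exp_le_one_iff.2 (neg_nonpos.2 hd)]
  have := log_le_sub_one_of_pos hpos
  unfold expNegMean
  rw [hfactor, log_mul (exp_pos _).ne' hpos.ne', log_exp]
  linarith

theorem abs_expNegMean_le (hw₁ : 0 ≤ w₁) (hw₂ : 0 ≤ w₂) (hw : w₁ + w₂ = 1) {s₁ s₂ c : ℝ}
    (hc : c * (1 + |s₁ - s₂|) ≤ min w₁ w₂) :
    |expNegMean w₁ w₂ s₁ s₂| ≤ max |s₁| |s₂| - c * |s₁ - s₂| := by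
  wlog h : s₂ ≤ s₁ generalizing w₁ w₂ s₁ s₂
  · have := this hw₂ hw₁ (by linarith) (by rwa [min_comm, abs_sub_comm]) (le_of_not_ge h)
    rwa [expNegMean, add_comm, ← expNegMean, max_comm, abs_sub_comm]
  rw [abs_of_nonneg (sub_nonneg.2 h)] at hc ⊢
  have hd : 0 ≤ s₁ - s₂ := sub_nonneg.2 h
  have hc₁ : c * (s₁ - s₂) ≤ w₁ * (s₁ - s₂) / (1 + (s₁ - s₂)) := by
    rw [le_div_iff₀ (by linarith), mul_right_comm]
    exact mul_le_mul_of_nonneg_right (hc.trans (min_le_left _ _)) hd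
  have hc₂ : c * (s₁ - s₂) ≤ w₂ * (s₁ - s₂) := by
    refine mul_le_mul_of_nonneg_right ?_ hd
    rcases le_or_gt c 0 with hc0 | hc0
    · linarith
    · nlinarith [min_le_right w₁ w₂]
  have hlo := le_expNegMean hw₁ hw₂ hw h
  have hhi := expNegMean_le hw₁ hw₂ hw s₁ s₂
  rw [abs_le]
  constructor
  · linarith [neg_abs_le s₂, le_max_right |s₁| |s₂|]
  · have : w₁ * s₁ + w₂ * s₂ = s₁ - w₂ * (s₁ - s₂) := by
      rw [show w₁ = 1 - w₂ by linarith]; ring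
    linarith [le_abs_self s₁, le_max_left |s₁| |s₂|]

end expNegMean

theorem abs_logb_weighted_rpow_neg_le {b w₁ w₂ t₁ t₂ c : ℝ} (hb : 1 < b) (hw₁ : 0 ≤ w₁)
    (hw₂ : 0 ≤ w₂) (hw : w₁ + w₂ = 1) (hc : c * (1 + log b * |t₁ - t₂|) ≤ min w₁ w₂) :
    |logb b (w₁ * b ^ (-t₁) + w₂ * b ^ (-t₂))| ≤ max |t₁| |t₂| - c * |t₁ - t₂| := by
  have hℓ : 0 < log b := log_pos hb
  have key := abs_expNegMean_le hw₁ hw₂ hw (s₁ := log b * t₁) (s₂ := log b * t₂) (c := c)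
    (by rwa [← mul_sub, abs_mul, abs_of_pos hℓ])
  have hmean : logb b (w₁ * b ^ (-t₁) + w₂ * b ^ (-t₂)) =
      -expNegMean w₁ w₂ (log b * t₁) (log b * t₂) / log b := by
    simp only [expNegMean, rpow_def_of_pos (by linarith : 0 < b), logb, mul_neg, neg_neg]
  rw [hmean, abs_div, abs_neg, abs_of_pos hℓ, div_le_iff₀ hℓ]
  simp only [← mul_sub, abs_mul, abs_of_pos hℓ, ← mul_max_of_nonneg _ _ hℓ.le] at key
  linarith

theorem fract_logb_le_logb_div {b x : ℝ} (hb : 1 < b) {k : ℤ} (hk : b ^ k ≤ x) :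
    Int.fract (logb b x) ≤ logb b (x / b ^ k) := by
  have hbk : 0 < b ^ k := zpow_pos (by linarith) k
  have hx : 0 < x := hbk.trans_le hk
  have hk' : (k : ℝ) ≤ logb b x := (le_logb_iff_rpow_le hb hx).2 (by rwa [rpow_intCast])
  rw [logb_div hx.ne' hbk.ne', ← rpow_intCast, logb_rpow (by linarith) hb.ne', Int.fract]
  have : (k : ℝ) ≤ ⌊logb b x⌋ := mod_cast Int.le_floor.2 hk'
  linarith

theorem fract_logb_zpow_add_zpow_mul_log_le {b : ℝ} (hb : 1 < b) (k₁ k₂ : ℤ) :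
    Int.fract (logb b (b ^ k₁ + b ^ k₂)) * log b ≤
      2 * min (b ^ k₁) (b ^ k₂) / (b ^ k₁ + b ^ k₂) := by
  wlog h : k₂ ≤ k₁ generalizing k₁ k₂
  · rw [add_comm, min_comm]
    exact this k₂ k₁ (le_of_not_ge h)
  have hz₁ : 0 < b ^ k₁ := zpow_pos (by linarith) k₁
  have hz₂ : 0 < b ^ k₂ := zpow_pos (by linarith) k₂
  have hle : b ^ k₂ ≤ b ^ k₁ := zpow_le_zpow_right₀ hb.le h
  calc Int.fract (logb b (b ^ k₁ + b ^ k₂)) * log b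
      ≤ logb b ((b ^ k₁ + b ^ k₂) / b ^ k₁) * log b :=
        mul_le_mul_of_nonneg_right (fract_logb_le_logb_div hb (le_add_of_nonneg_right hz₂.le))
          (log_nonneg hb.le)
    _ = log ((b ^ k₁ + b ^ k₂) / b ^ k₁) := div_mul_cancel₀ _ (log_pos hb).ne'
    _ ≤ (b ^ k₁ + b ^ k₂) / b ^ k₁ - 1 := log_le_sub_one_of_pos (by positivity)
    _ = b ^ k₂ / b ^ k₁ := by field_simp; ring
    _ ≤ 2 * min (b ^ k₁) (b ^ k₂) / (b ^ k₁ + b ^ k₂) := by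
      rw [min_eq_right hle, div_le_div_iff₀ hz₁ (by positivity)]
      nlinarith

theorem add_div_add_eq_inv_weighted_rpow_neg_logb {b y₁ y₂ z₁ z₂ : ℝ} (hb₀ : 0 < b) (hb₁ : b ≠ 1)
    (hy₁ : 0 < y₁) (hy₂ : 0 < y₂) (hz₁ : 0 < z₁) (hz₂ : 0 < z₂) :
    (z₁ + z₂) / (y₁ + y₂) = (z₁ / (z₁ + z₂) * b ^ (-logb b (z₁ / y₁)) +
      z₂ / (z₁ + z₂) * b ^ (-logb b (z₂ / y₂)))⁻¹ := by
  rw [rpow_neg hb₀.le, rpow_neg hb₀.le, rpow_logb hb₀ hb₁ (by positivity),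
    rpow_logb hb₀ hb₁ (by positivity)]
  field_simp

theorem le_three_halves_mul_log_one_add {δ : ℝ} (hδ0 : 0 ≤ δ) (hδ : δ ≤ 1 / 2) :
    δ ≤ 3 / 2 * log (1 + δ) := by
  have h := one_sub_inv_le_log_of_pos (by linarith : 0 < 1 + δ)
  rw [show 1 - (1 + δ)⁻¹ = δ / (1 + δ) by field_simp; ring, div_le_iff₀ (by linarith)] at h
  nlinarith

theorem correction_le_of_mul_log_le {δ p e w : ℝ} (hδ0 : 0 ≤ δ) (hδ : δ ≤ 1 / 2) (hp : 0 ≤ p)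
    (he : 0 ≤ e) (hδe : log (1 + δ) * e ≤ 1 / 2) (hpw : p * log (1 + δ) ≤ 2 * w) :
    1 / 20 * δ * p * (1 + log (1 + δ) * e) ≤ w := by
  have hℓ : 0 ≤ log (1 + δ) := log_nonneg (by linarith)
  calc 1 / 20 * δ * p * (1 + log (1 + δ) * e)
      ≤ 1 / 20 * (3 / 2 * log (1 + δ)) * p * (3 / 2) := by
        gcongr
        · exact le_three_halves_mul_log_one_add hδ0 hδ
        · linarith
    _ = 9 / 80 * (p * log (1 + δ)) := by ring
    _ ≤ w := by nlinarith [mul_nonneg hp hℓ]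

theorem self_correct (δ : ℝ) (hδ0 : 0 < δ) (hδ : δ < 1/2)
    (y₁ y₂ : ℝ) (hy₁ : 0 < y₁) (hy₂ : 0 < y₂) (k₁ k₂ : ℤ)
    (z₁ z₂ : ℝ) (hz₁ : z₁ = (1 + δ) ^ k₁) (hz₂ : z₂ = (1 + δ) ^ k₂)
    (lam₁ lam₂ : ℝ)
    (hlam₁ : lam₁ = Real.logb (1 + δ) (z₁ / y₁))
    (hlam₂ : lam₂ = Real.logb (1 + δ) (z₂ / y₂))
    (hmax : max |lam₁| |lam₂| < 1 / (4 * δ))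
    (a p : ℝ) (ha : a = z₁ + z₂)
    (hp : p = Real.logb (1 + δ) a - ⌊Real.logb (1 + δ) a⌋) :
    |Real.logb (1 + δ) (a / (y₁ + y₂))| ≤
      max |lam₁| |lam₂| - (1/20) * δ * p * |lam₁ - lam₂| := by
  rw [Int.self_sub_floor] at hp
  have hb : 1 < 1 + δ := by linarith
  have hz₁0 : 0 < z₁ := hz₁ ▸ zpow_pos (by linarith) k₁
  have hz₂0 : 0 < z₂ := hz₂ ▸ zpow_pos (by linarith) k₂
  have hfract : p * log (1 + δ) ≤ 2 * (min z₁ z₂ / a) := by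
    rw [hp, ha, hz₁, hz₂, ← mul_div_assoc]
    exact fract_logb_zpow_add_zpow_mul_log_le hb k₁ k₂
  have hspread : log (1 + δ) * |lam₁ - lam₂| ≤ 1 / 2 := calc
    _ ≤ δ * (|lam₁| + |lam₂|) :=
      mul_le_mul (by linarith [log_le_sub_one_of_pos (by linarith : 0 < 1 + δ)]) (abs_sub _ _)
        (abs_nonneg _) hδ0.le
    _ ≤ δ * (2 * (1 / (4 * δ))) := by
      gcongr
      linarith [le_max_left |lam₁| |lam₂|, le_max_right |lam₁| |lam₂|]
    _ = 1 / 2 := by field_simp; ring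
  rw [ha, add_div_add_eq_inv_weighted_rpow_neg_logb (by linarith) hb.ne' hy₁ hy₂ hz₁0 hz₂0,
    ← hlam₁, ← hlam₂, ← ha, logb_inv, abs_neg]
  have ha0 : 0 < a := ha ▸ add_pos hz₁0 hz₂0
  refine abs_logb_weighted_rpow_neg_le hb (by positivity) (by positivity)
    (by rw [← add_div, ← ha, div_self ha0.ne']) ?_
  rw [min_div_div_right ha0.le]
  exact correction_le_of_mul_log_le hδ0.le hδ.le (hp ▸ Int.fract_nonneg _) (abs_nonneg _)
    hspread hfract
end

section
/- For all real numbers t and p with 0 < t < 1/2 and 0 ≤ p ≤ 1, one has p·e^{t(1−p)} + (1−p)·e^{−tp} ≤ e^{t²·p}. -/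
/-!
Factor out `e^{-tp}`: the left side is `e^{-tp} (1 + p (e^t - 1)) ≤ e^{p (e^t - 1 - t)}` by
`1 + x ≤ e^x`, and `e^t - 1 - t ≤ t²` for `|t| ≤ 1`.
-/

open Real

theorem centered_bernoulli_mgf_le_exp (t p : ℝ) :
    p * exp (t * (1 - p)) + (1 - p) * exp (-(t * p)) ≤ exp (p * (exp t - 1 - t)) := by
  have hfactor : p * exp (t * (1 - p)) + (1 - p) * exp (-(t * p)) =
      exp (-(t * p)) * (p * (exp t - 1) + 1) := by
    rw [show t * (1 - p) = t + -(t * p) by ring, exp_add]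
    ring
  calc p * exp (t * (1 - p)) + (1 - p) * exp (-(t * p))
      = exp (-(t * p)) * (p * (exp t - 1) + 1) := hfactor
    _ ≤ exp (-(t * p)) * exp (p * (exp t - 1)) :=
        mul_le_mul_of_nonneg_left (add_one_le_exp _) (exp_pos _).le
    _ = exp (p * (exp t - 1 - t)) := by rw [← exp_add]; ring_nf

theorem exp_sub_one_sub_le_sq {x : ℝ} (hx : |x| ≤ 1) : exp x - 1 - x ≤ x ^ 2 :=
  (le_abs_self _).trans (abs_exp_sub_one_sub_id_le hx)

theorem mgf_bound_up_general (t p : ℝ) (ht0 : 0 < t) (ht : t < 1/2)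
    (hp0 : 0 ≤ p) :
    p * Real.exp (t * (1 - p)) + (1 - p) * Real.exp (-(t * p)) ≤
      Real.exp (t ^ 2 * p) := by
  have ht_abs : |t| ≤ 1 := by rw [abs_of_pos ht0]; linarith
  refine (centered_bernoulli_mgf_le_exp t p).trans (exp_le_exp.mpr ?_)
  rw [mul_comm (t ^ 2)]
  exact mul_le_mul_of_nonneg_left (exp_sub_one_sub_le_sq ht_abs) hp0

theorem mgf_bound_up (t p : ℝ) (ht0 : 0 < t) (ht : t < 1/2)
    (hp0 : 0 ≤ p) (hp1 : p ≤ 1) :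
    p * Real.exp (t * (1 - p)) + (1 - p) * Real.exp (-(t * p)) ≤
      Real.exp (t ^ 2 * p) :=
  mgf_bound_up_general t p ht0 ht hp0
end

section
/- For all real numbers t and p with 0 < t < 1/2 and 0 ≤ p ≤ 1, one has p·e^{−t(1−p)} + (1−p)·e^{tp} ≤ e^{t²·p}. -/
open Real

lemma Real.exp_neg_le_one_sub_add_sq {t : ℝ} (ht : 0 ≤ t) : exp (-t) ≤ 1 - t + t ^ 2 := by
  have h : exp (-t) * (1 + t) ≤ 1 := by
    calc exp (-t) * (1 + t) ≤ exp (-t) * exp t := by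
          gcongr; linarith [add_one_le_exp t]
      _ = 1 := by rw [← exp_add, neg_add_cancel, exp_zero]
  nlinarith [exp_pos (-t), pow_nonneg ht 3]

lemma Real.one_sub_mul_one_sub_exp_neg_le {p t : ℝ} (hp : 0 ≤ p) (ht : 0 ≤ t) :
    1 - p * (1 - exp (-t)) ≤ exp (p * (t ^ 2 - t)) :=
  calc 1 - p * (1 - exp (-t)) ≤ exp (-(p * (1 - exp (-t)))) := by
        linarith [add_one_le_exp (-(p * (1 - exp (-t))))]
    _ ≤ exp (p * (t ^ 2 - t)) := by
        gcongr
        nlinarith [exp_neg_le_one_sub_add_sq ht]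

theorem mgf_bound_down_general (t p : ℝ) (ht0 : 0 < t)
    (hp0 : 0 ≤ p) :
    p * Real.exp (-(t * (1 - p))) + (1 - p) * Real.exp (t * p) ≤
      Real.exp (t ^ 2 * p) :=
  calc p * exp (-(t * (1 - p))) + (1 - p) * exp (t * p)
      = exp (t * p) * (1 - p * (1 - exp (-t))) := by
        rw [show -(t * (1 - p)) = t * p + -t by ring, exp_add]; ring
    _ ≤ exp (t * p) * exp (p * (t ^ 2 - t)) := by
        gcongr; exact one_sub_mul_one_sub_exp_neg_le hp0 ht0.le
    _ = exp (t ^ 2 * p) := by rw [← exp_add]; ring_nf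

theorem mgf_bound_down (t p : ℝ) (ht0 : 0 < t) (ht : t < 1/2)
    (hp0 : 0 ≤ p) (hp1 : p ≤ 1) :
    p * Real.exp (-(t * (1 - p))) + (1 - p) * Real.exp (t * p) ≤
      Real.exp (t ^ 2 * p) :=
  mgf_bound_down_general t p ht0 hp0
end

section
/- Let T be an Approximate Addition Tree with parameter δ > 0 and maximum depth h (the depth of a node is its distance from the root), in which every node has positive exact value. Then, with probability 1 (i.e. for every realization of the random rounding choices), every node v satisfies |λ_v| ≤ h + 1, where λ_v = log_{(1+δ)}(z_v / y_v) is the error at v. In particular, if additionally ε ∈ (0, 1/2) and δ ≤ ε/(4(h+1)), then for every node v one has max{ z_v/y_v , y_v/z_v } < 1 + ε. -/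
/-- An Addition Tree: a full rooted binary tree whose leaves carry
non-negative integer inputs. -/
inductive AddTree where
  | leaf : ℕ → AddTree
  | node : AddTree → AddTree → AddTree

namespace AddTree

/-- The exact value computed at (the root of) an Addition Tree:
inputs at leaves, sums at internal nodes. -/
def exactVal : AddTree → ℕ
  | leaf x => x
  | node t₁ t₂ => exactVal t₁ + exactVal t₂

/-- The number of nodes of the tree. -/
def size : AddTree → ℕ
  | leaf _ => 1
  | node t₁ t₂ => size t₁ + size t₂ + 1

/-- The number of internal nodes of the tree. -/
def numInternal : AddTree → ℕ
  | leaf _ => 0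
  | node t₁ t₂ => numInternal t₁ + numInternal t₂ + 1

/-- The maximum depth (height) of the tree. -/
def height : AddTree → ℕ
  | leaf _ => 0
  | node t₁ t₂ => max (height t₁) (height t₂) + 1

/-- The balanced height of (the root of) the tree. -/
def bh : AddTree → ℕ
  | leaf _ => 0
  | node t₁ t₂ => if bh t₁ = bh t₂ then bh t₁ + 1 else max (bh t₁) (bh t₂)

/-- Every node of the tree has positive exact value (equivalently, every
leaf input is positive). -/
def allPositive : AddTree → Prop
  | leaf x => 0 < x
  | node t₁ t₂ => allPositive t₁ ∧ allPositive t₂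

/-- The approximate value computed by an Approximate Addition Tree with
parameter `δ`.  The internal nodes of the tree are assigned distinct indices
(the root of the subtree rooted at index `i` uses the random number `ω i`,
its left subtree uses indices starting at `i + 1`, and its right subtree
indices starting at `i + 1 + numInternal t₁`).  At an internal node the sum
`a` of the children's approximate values is randomly rounded to
`(1 + δ) ^ ⌊log_{1+δ} a + r⌋`, where `r = ω i` is the uniform random choice
at that node (and `0` stays `0`). -/
noncomputable def approxVal (δ : ℝ) (ω : ℕ → ℝ) : AddTree → ℕ → ℝ
  | leaf x, _ => (x : ℝ)
  | node t₁ t₂, i =>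
      let a := approxVal δ ω t₁ (i + 1) + approxVal δ ω t₂ (i + 1 + numInternal t₁)
      if a = 0 then 0 else (1 + δ) ^ (⌊Real.logb (1 + δ) a + ω i⌋ : ℤ)

/-- The list of all nodes (subtrees) of the tree, each paired with the
index it receives in the indexing scheme of `approxVal`, when the root
receives index `i`. -/
def nodesIdx : AddTree → ℕ → List (AddTree × ℕ)
  | leaf x, i => [(leaf x, i)]
  | node t₁ t₂, i =>
      (node t₁ t₂, i) ::
        (nodesIdx t₁ (i + 1) ++ nodesIdx t₂ (i + 1 + numInternal t₁))

/-- The error `λ_v = log_{1+δ} (z_v / y_v)` at the node `v` whose assigned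
index is `i`, given the random choices `ω`. -/
noncomputable def err (δ : ℝ) (ω : ℕ → ℝ) (v : AddTree) (i : ℕ) : ℝ :=
  Real.logb (1 + δ) (approxVal δ ω v i / (exactVal v : ℝ))

/-- The uniform probability measure on `(0,1)^m`: the random source of an
Approximate Addition Tree with `m` internal nodes. -/
noncomputable def unif (m : ℕ) : MeasureTheory.Measure (Fin m → ℝ) :=
  MeasureTheory.Measure.pi fun _ => MeasureTheory.volume.restrict (Set.Ioo (0:ℝ) 1)

/-- Extend a finite tuple of random choices to a function `ℕ → ℝ`
(coordinates beyond `m` are irrelevant for `approxVal` on a tree with `m`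
internal nodes whose root gets index `0`). -/
noncomputable def extend {m : ℕ} (ω : Fin m → ℝ) : ℕ → ℝ :=
  fun j => if h : j < m then ω ⟨j, h⟩ else 1/2

end AddTree

/-!
Track the multiplicative error of every node: if `z` approximates `y` within a factor `c`
(`y ≤ c z` and `z ≤ c y`), sums of such approximations are again within `c`, and one
randomized rounding step `a ↦ b ^ ⌊log_b a + r⌋` with `r ∈ [0, 1]` costs one more factor of
`b = 1 + δ`. By induction a node of height `k` is within `(1 + δ) ^ k` of its exact value,
whatever the random choices; taking `log_{1+δ}` gives the error bound, and
`(1 + δ) ^ h ≤ exp (h δ) ≤ exp (ε / 4) < 1 + ε` gives the relative bound.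
-/

open Real

def WithinFactor (c z y : ℝ) : Prop := y ≤ c * z ∧ z ≤ c * y

namespace WithinFactor

variable {c d z w y : ℝ}

lemma pos (h : WithinFactor c z y) (hc : 0 ≤ c) (hy : 0 < y) : 0 < z := by
  by_contra! hz
  nlinarith [h.1, mul_nonpos_of_nonneg_of_nonpos hc hz]

lemma add {z₁ z₂ y₁ y₂ : ℝ} (h₁ : WithinFactor c z₁ y₁) (h₂ : WithinFactor c z₂ y₂) :
    WithinFactor c (z₁ + z₂) (y₁ + y₂) :=
  ⟨by linarith [h₁.1, h₂.1], by linarith [h₁.2, h₂.2]⟩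

lemma trans (hzy : WithinFactor c z y) (hwz : WithinFactor d w z) (hc : 0 ≤ c) (hd : 0 ≤ d) :
    WithinFactor (d * c) w y := by
  constructor
  · calc y ≤ c * z := hzy.1
      _ ≤ c * (d * w) := by gcongr; exact hwz.1
      _ = d * c * w := by ring
  · calc w ≤ d * z := hwz.2
      _ ≤ d * (c * y) := by gcongr; exact hzy.2
      _ = d * c * y := by ring

lemma max_div_le (h : WithinFactor c z y) (hy : 0 < y) (hz : 0 < z) : max (z / y) (y / z) ≤ c :=
  max_le ((div_le_iff₀ hy).2 (by linarith [h.2])) ((div_le_iff₀ hz).2 (by linarith [h.1]))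

lemma abs_logb_div_le {b : ℝ} {k : ℕ} (hb : 1 < b) (h : WithinFactor (b ^ k) z y)
    (hy : 0 < y) : |logb b (z / y)| ≤ k := by
  have hz : 0 < z := h.pos (by positivity) hy
  have hmax := h.max_div_le hy hz
  have hlog {x : ℝ} (hx : 0 < x) (hxk : x ≤ b ^ k) : logb b x ≤ k := by
    simpa [logb_pow, logb_self_eq_one hb] using logb_le_logb_of_le hb hx hxk
  rw [abs_le]
  constructor
  · have := hlog (div_pos hy hz) (le_max_right _ _ |>.trans hmax)
    rw [← inv_div, logb_inv] at this
    linarith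
  · exact hlog (div_pos hz hy) (le_max_left _ _ |>.trans hmax)

end WithinFactor

lemma withinFactor_zpow_floor_logb_add {b a r : ℝ} (hb : 1 < b) (ha : 0 < a)
    (hr : r ∈ Set.Icc 0 1) :
    WithinFactor b (b ^ ⌊logb b a + r⌋) a := by
  set n := ⌊logb b a + r⌋
  have hb0 : 0 < b := by linarith
  have hn_le : (n : ℝ) ≤ logb b a + 1 := (Int.floor_le _).trans (by linarith [hr.2])
  have hn_gt : logb b a - 1 < n := (Int.sub_one_lt_floor _).trans_le' (by linarith [hr.1])
  constructor
  · have : a ≤ b ^ ((n : ℝ) + 1) := (logb_le_iff_le_rpow hb ha).1 (by linarith)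
    rwa [rpow_add_one hb0.ne', rpow_intCast, mul_comm] at this
  · have : b ^ ((n : ℝ) - 1) ≤ a := (le_logb_iff_rpow_le hb ha).1 (by linarith)
    rw [rpow_sub_one hb0.ne', rpow_intCast, div_le_iff₀ hb0] at this
    linarith

lemma exp_div_four_lt_one_add {ε : ℝ} (hε : 0 < ε) (hε₃ : ε ≤ 3) : exp (ε / 4) < 1 + ε := by
  calc exp (ε / 4) < 1 / (1 - ε / 4) :=
        exp_bound_div_one_sub_of_interval' (by positivity) (by linarith)
    _ ≤ 1 + ε := by
      rw [div_le_iff₀ (by linarith)]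
      nlinarith

lemma one_add_pow_lt_one_add {δ ε : ℝ} {n : ℕ} (hδ : 0 ≤ δ) (hε : 0 < ε) (hε₃ : ε ≤ 3)
    (hnδ : n * δ ≤ ε / 4) : (1 + δ) ^ n < 1 + ε :=
  calc (1 + δ) ^ n ≤ exp δ ^ n := by gcongr; linarith [add_one_le_exp δ]
    _ = exp (n * δ) := (exp_nat_mul δ n).symm
    _ ≤ exp (ε / 4) := exp_le_exp.2 hnδ
    _ < 1 + ε := exp_div_four_lt_one_add hε hε₃

namespace AddTree

lemma exactVal_pos {t : AddTree} (h : t.allPositive) : 0 < t.exactVal := by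
  induction t with
  | leaf x => exact h
  | node t₁ t₂ ih₁ _ => exact Nat.add_pos_left (ih₁ h.1) _

lemma allPositive_of_mem_nodesIdx {t : AddTree} {i : ℕ} {p : AddTree × ℕ} (ht : t.allPositive)
    (hp : p ∈ t.nodesIdx i) : p.1.allPositive := by
  induction t generalizing i with
  | leaf x => simp_all [nodesIdx]
  | node t₁ t₂ ih₁ ih₂ =>
    simp only [nodesIdx, List.mem_cons, List.mem_append] at hp
    rcases hp with rfl | hp | hp
    exacts [ht, ih₁ ht.1 hp, ih₂ ht.2 hp]

lemma height_le_of_mem_nodesIdx {t : AddTree} {i : ℕ} {p : AddTree × ℕ}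
    (hp : p ∈ t.nodesIdx i) : p.1.height ≤ t.height := by
  induction t generalizing i with
  | leaf x => simp_all [nodesIdx]
  | node t₁ t₂ ih₁ ih₂ =>
    simp only [nodesIdx, List.mem_cons, List.mem_append] at hp
    rcases hp with rfl | hp | hp
    · rfl
    · exact (ih₁ hp).trans (Nat.le_succ_of_le (le_max_left _ _))
    · exact (ih₂ hp).trans (Nat.le_succ_of_le (le_max_right _ _))

lemma withinFactor_approxVal {δ : ℝ} (hδ : 0 < δ) {ω : ℕ → ℝ} (hω : ∀ i, ω i ∈ Set.Icc 0 1)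
    {t : AddTree} (ht : t.allPositive) {H : ℕ} (hH : t.height ≤ H) (i : ℕ) :
    WithinFactor ((1 + δ) ^ H) (approxVal δ ω t i) t.exactVal := by
  have hb : 1 < 1 + δ := by linarith
  induction t generalizing H i with
  | leaf x =>
    have hx : (0 : ℝ) ≤ x := x.cast_nonneg
    exact ⟨le_mul_of_one_le_left hx (one_le_pow₀ hb.le),
      le_mul_of_one_le_left hx (one_le_pow₀ hb.le)⟩
  | node t₁ t₂ ih₁ ih₂ =>
    cases H with
    | zero => simp [height] at hH
    | succ H =>
      obtain ⟨hH₁, hH₂⟩ : t₁.height ≤ H ∧ t₂.height ≤ H := by simpa [height] using hH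
      have hsum := (ih₁ ht.1 hH₁ (i + 1)).add (ih₂ ht.2 hH₂ (i + 1 + t₁.numInternal))
      have hsum_pos := hsum.pos (by positivity) (by exact_mod_cast exactVal_pos ht)
      have hround := withinFactor_zpow_floor_logb_add hb hsum_pos (hω i)
      simpa [approxVal, exactVal, hsum_pos.ne', pow_succ'] using
        hsum.trans hround (by positivity) (by positivity)

end AddTree

/-- Paper's Theorem 4: in an Approximate Addition Tree of maximum depth `h`
with all exact values positive, for every realization of the random rounding
choices every node `v` satisfies `|λ_v| ≤ h + 1`; consequently, if
`ε ∈ (0, 1/2)` and `δ ≤ ε / (4 (h + 1))`, then every node satisfies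
`max (z_v / y_v) (y_v / z_v) < 1 + ε`. -/
theorem approxAdditionTree_bounded_depth (δ : ℝ) (hδ : 0 < δ)
    (T : AddTree) (hpos : T.allPositive)
    (ω : ℕ → ℝ) (hω : ∀ i, ω i ∈ Set.Ioo (0:ℝ) 1) :
    (∀ p ∈ T.nodesIdx 0, |AddTree.err δ ω p.1 p.2| ≤ (T.height : ℝ) + 1) ∧
      (∀ ε : ℝ, 0 < ε → ε < 1/2 → δ ≤ ε / (4 * ((T.height : ℝ) + 1)) →
        ∀ p ∈ T.nodesIdx 0,
          max (AddTree.approxVal δ ω p.1 p.2 / (p.1.exactVal : ℝ))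
              ((p.1.exactVal : ℝ) / AddTree.approxVal δ ω p.1 p.2) < 1 + ε) := by
  have hb : 1 < 1 + δ := by linarith
  have hnode : ∀ p ∈ T.nodesIdx 0, 0 < (p.1.exactVal : ℝ) ∧
      WithinFactor ((1 + δ) ^ T.height) (AddTree.approxVal δ ω p.1 p.2) p.1.exactVal := by
    intro p hp
    have hp₁ := AddTree.allPositive_of_mem_nodesIdx hpos hp
    exact ⟨by exact_mod_cast AddTree.exactVal_pos hp₁,
      AddTree.withinFactor_approxVal hδ (fun i => Set.Ioo_subset_Icc_self (hω i)) hp₁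
        (AddTree.height_le_of_mem_nodesIdx hp) p.2⟩
  refine ⟨fun p hp => ?_, fun ε hε hε₂ hδε p hp => ?_⟩
  · obtain ⟨hy, hw⟩ := hnode p hp
    exact (hw.abs_logb_div_le hb hy).trans (by linarith)
  · obtain ⟨hy, hw⟩ := hnode p hp
    have hHδ : T.height * δ ≤ ε / 4 := by
      rw [le_div_iff₀ (by positivity)] at hδε
      nlinarith
    exact (hw.max_div_le hy (hw.pos (by positivity) hy)).trans_lt
      (one_add_pow_lt_one_add hδ.le hε (by linarith) hHδ)
end
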